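/- Let (T, X) be a nice tree decomposition of a graph G on n vertices with at most 4n nodes and width at most w (so |X_u| ≤ w + 1 for all nodes u, though the paper bounds |X_u| ≤ tw(G) loosely). Then there exists a bottom-up layout L : V(T) → {1, ..., |V(T)|} (i.e., a bijection with L(child) < L(parent) for every parent–child edge) such that for every i, the set J_L(i) of vertices of G introduced in bags of nodes L⁻¹(1), ..., L⁻¹(i) but not yet forgotten satisfies |J_L(i)| ≤ (w + 1) · ⌈log₂(4n)⌉. -/

import Mathlib

set_option linter.unusedSectionVars false

namespace Stmt2Aux

open List Finset

structure RT (V : Type*) where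
  parent : V → V
  root : V
  hroot : parent root = root
  hreach : ∀ v, ∃ n, parent^[n] v = root

variable {V : Type*} [Fintype V] [DecidableEq V] (T : RT V)

noncomputable def dep (v : V) : ℕ := Nat.find (T.hreach v)

lemma iterate_dep (v : V) : T.parent^[dep T v] v = T.root := Nat.find_spec (T.hreach v)

lemma iterate_root (n : ℕ) : T.parent^[n] T.root = T.root := Function.iterate_fixed T.hroot n

lemma dep_eq_zero_iff (v : V) : dep T v = 0 ↔ v = T.root := by
  constructor
  · intro h
    have h2 := iterate_dep T v
    rw [h] at h2; simpa using h2
  · rintro rfl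
    exact Nat.find_eq_zero _ |>.mpr (by simp)

lemma dep_parent (v : V) (hv : v ≠ T.root) : dep T v = dep T (T.parent v) + 1 := by
  have h1 : dep T v ≠ 0 := fun h => hv ((dep_eq_zero_iff T v).mp h)
  have h2 : T.parent^[dep T v - 1] (T.parent v) = T.root := by
    have h := iterate_dep T v
    rwa [← Nat.succ_pred_eq_of_ne_zero h1, Function.iterate_succ_apply] at h
  have h3 : dep T (T.parent v) ≤ dep T v - 1 := Nat.find_le h2
  have h4 : T.parent^[dep T (T.parent v) + 1] v = T.root := by
    rw [Function.iterate_succ_apply]; exact iterate_dep T (T.parent v)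
  have h5 : dep T v ≤ dep T (T.parent v) + 1 := Nat.find_le h4
  omega

lemma dep_of_iterate {v c : V} {n : ℕ} (h : T.parent^[n] v = c) (hc : c ≠ T.root) :
    dep T v = dep T c + n := by
  induction n generalizing v with
  | zero => simp at h; subst h; rfl
  | succ n ih =>
    have hv : v ≠ T.root := by
      rintro rfl; rw [iterate_root] at h; exact hc h.symm
    rw [Function.iterate_succ_apply] at h
    rw [dep_parent T v hv, ih h]
    omega

open Classical in
noncomputable def desc (u : V) : Finset V := univ.filter (fun v => ∃ n, T.parent^[n] v = u)

lemma mem_desc {v u : V} : v ∈ desc T u ↔ ∃ n, T.parent^[n] v = u := by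
  simp [desc]

open Classical in
noncomputable def children (u : V) : Finset V :=
  univ.filter (fun c => T.parent c = u ∧ c ≠ T.root)

lemma mem_children {c u : V} : c ∈ children T u ↔ T.parent c = u ∧ c ≠ T.root := by
  simp [children]

lemma self_mem_desc (u : V) : u ∈ desc T u := (mem_desc T).mpr ⟨0, rfl⟩

lemma mem_desc_root (v : V) : v ∈ desc T T.root := (mem_desc T).mpr ⟨_, iterate_dep T v⟩

lemma desc_subset_of_mem {c u : V} (h : c ∈ desc T u) : desc T c ⊆ desc T u := by
  intro v hv
  obtain ⟨m, hm⟩ := (mem_desc T).mp hv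
  obtain ⟨n, hn⟩ := (mem_desc T).mp h
  exact (mem_desc T).mpr ⟨n + m, by rw [Function.iterate_add_apply, hm, hn]⟩

lemma child_mem_desc {c u : V} (hc : c ∈ children T u) : c ∈ desc T u :=
  (mem_desc T).mpr ⟨1, by simpa using ((mem_children T).mp hc).1⟩

lemma not_mem_desc_of_child {c u : V} (hc : c ∈ children T u) : u ∉ desc T c := by
  intro h
  obtain ⟨hp, hcr⟩ := (mem_children T).mp hc
  obtain ⟨n, hn⟩ := (mem_desc T).mp h
  have h1 : dep T u = dep T c + n := dep_of_iterate T hn hcr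
  have h2 : dep T c = dep T u + 1 := by rw [dep_parent T c hcr, hp]
  omega

lemma desc_disjoint {c₁ c₂ u : V} (h1 : c₁ ∈ children T u) (h2 : c₂ ∈ children T u)
    (hne : c₁ ≠ c₂) : Disjoint (desc T c₁) (desc T c₂) := by
  rw [Finset.disjoint_left]
  intro v hv1 hv2
  obtain ⟨n1, hn1⟩ := (mem_desc T).mp hv1
  obtain ⟨n2, hn2⟩ := (mem_desc T).mp hv2
  have d1 := dep_of_iterate T hn1 ((mem_children T).mp h1).2
  have d2 := dep_of_iterate T hn2 ((mem_children T).mp h2).2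
  have e1 : dep T c₁ = dep T u + 1 := by
    rw [dep_parent T c₁ ((mem_children T).mp h1).2, ((mem_children T).mp h1).1]
  have e2 : dep T c₂ = dep T u + 1 := by
    rw [dep_parent T c₂ ((mem_children T).mp h2).2, ((mem_children T).mp h2).1]
  have hnn : n1 = n2 := by omega
  exact hne (by rw [← hn1, ← hn2, hnn])

lemma parent_mem_desc {v c : V} (h : v ∈ desc T c) (hv : v ≠ c) : T.parent v ∈ desc T c := by
  obtain ⟨n, hn⟩ := (mem_desc T).mp h
  match n, hn with
  | 0, hn => simp at hn; exact absurd hn hv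
  | n+1, hn =>
    exact (mem_desc T).mpr ⟨n, by rwa [Function.iterate_succ_apply] at hn⟩

lemma exists_child_of_mem_desc {v u : V} (h : v ∈ desc T u) (hv : v ≠ u) :
    ∃ c ∈ children T u, v ∈ desc T c := by
  have hex : ∃ n, T.parent^[n] v = u := (mem_desc T).mp h
  set m := Nat.find hex with hm
  have hspec : T.parent^[m] v = u := Nat.find_spec hex
  have hm0 : m ≠ 0 := by
    intro h0; rw [h0] at hspec; simp at hspec; exact hv hspec
  have h1 : T.parent^[m] v = T.parent (T.parent^[m-1] v) := by
    have h2 := Function.iterate_succ_apply' T.parent (m-1) v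
    have h3 : (m - 1).succ = m := by omega
    rwa [h3] at h2
  refine ⟨T.parent^[m-1] v, (mem_children T).mpr ⟨?_, ?_⟩, (mem_desc T).mpr ⟨m-1, rfl⟩⟩
  · rw [← h1]; exact hspec
  · intro hc
    have hu : u = T.root := by rw [← hspec, h1, hc, T.hroot]
    have hlt : m - 1 < m := by omega
    exact Nat.find_min hex hlt (by rw [hc, ← hu])

lemma desc_eq_insert (u : V) :
    desc T u = insert u ((children T u).biUnion (fun c => desc T c)) := by
  ext v
  simp only [Finset.mem_insert, Finset.mem_biUnion]
  constructor
  · intro h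
    by_cases hv : v = u
    · exact Or.inl hv
    · exact Or.inr (exists_child_of_mem_desc T h hv)
  · rintro (rfl | ⟨c, hc, hv⟩)
    · exact self_mem_desc T v
    · exact desc_subset_of_mem T (child_mem_desc T hc) hv

lemma card_desc_pos (u : V) : 0 < (desc T u).card :=
  Finset.card_pos.mpr ⟨u, self_mem_desc T u⟩

lemma card_desc_lt {c u : V} (hc : c ∈ children T u) : (desc T c).card < (desc T u).card := by
  apply Finset.card_lt_card
  rw [Finset.ssubset_iff_of_subset (desc_subset_of_mem T (child_mem_desc T hc))]
  exact ⟨u, self_mem_desc T u, not_mem_desc_of_child T hc⟩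

lemma node_induction {P : V → Prop} (h : ∀ u, (∀ c ∈ children T u, P c) → P u) (u : V) :
    P u := by
  generalize hn : (desc T u).card = n
  induction n using Nat.strong_induction_on generalizing u with
  | _ n ih =>
    subst hn
    exact h u fun c hc => ih _ (card_desc_lt T hc) c rfl

noncomputable def ordChildren (u : V) : List V :=
  (children T u).toList.mergeSort (fun a b => decide ((desc T b).card ≤ (desc T a).card))

lemma ordChildren_perm (u : V) : ordChildren T u ~ (children T u).toList :=
  List.mergeSort_perm _ _

lemma mem_ordChildren {c u : V} : c ∈ ordChildren T u ↔ c ∈ children T u := by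
  rw [List.Perm.mem_iff (ordChildren_perm T u), Finset.mem_toList]

lemma ordChildren_nodup (u : V) : (ordChildren T u).Nodup :=
  ((ordChildren_perm T u).nodup_iff).mpr (Finset.nodup_toList _)

lemma ordChildren_length (u : V) : (ordChildren T u).length = (children T u).card := by
  rw [(ordChildren_perm T u).length_eq, Finset.length_toList]

lemma ordChildren_sorted (u : V) :
    (ordChildren T u).Pairwise (fun a b => (desc T b).card ≤ (desc T a).card) := by
  have h := List.pairwise_mergeSort
    (le := fun a b : V => decide ((desc T b).card ≤ (desc T a).card))
    (fun a b c hab hbc => by simp_all; omega)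
    (fun a b => by simp; omega) (children T u).toList
  exact h.imp (fun hab => by simpa using hab)

noncomputable def dfs : V → List V := fun u =>
  ((ordChildren T u).attach.map (fun c => dfs c.1)).flatten ++ [u]
termination_by u => (desc T u).card
decreasing_by exact card_desc_lt T ((mem_ordChildren T).mp c.2)

lemma dfs_def (u : V) :
    dfs T u = ((ordChildren T u).map (dfs T)).flatten ++ [u] := by
  rw [dfs]
  congr 1
  rw [← List.attach_map_val (l := ordChildren T u) (f := dfs T)]

lemma mem_dfs (u : V) : ∀ v, v ∈ dfs T u ↔ v ∈ desc T u := by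
  induction u using node_induction T with
  | h u ih =>
    intro v
    rw [dfs_def, desc_eq_insert]
    simp only [List.mem_append, List.mem_singleton, Finset.mem_insert, Finset.mem_biUnion]
    constructor
    · intro h
      rcases h with h | rfl
      · rw [List.mem_flatten] at h
        obtain ⟨blk, hblk, hv⟩ := h
        rw [List.mem_map] at hblk
        obtain ⟨c, hc, rfl⟩ := hblk
        exact Or.inr ⟨c, (mem_ordChildren T).mp hc, (ih c ((mem_ordChildren T).mp hc) v).mp hv⟩
      · exact Or.inl rfl
    · rintro (rfl | ⟨c, hc, hv⟩)
      · exact Or.inr rfl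
      · refine Or.inl ?_
        rw [List.mem_flatten]
        exact ⟨dfs T c, List.mem_map.mpr ⟨c, (mem_ordChildren T).mpr hc, rfl⟩,
          (ih c hc v).mpr hv⟩

lemma not_mem_flatten_self (u : V) :
    u ∉ ((ordChildren T u).map (dfs T)).flatten := by
  rw [List.mem_flatten]
  rintro ⟨blk, hblk, hu⟩
  rw [List.mem_map] at hblk
  obtain ⟨c, hc, rfl⟩ := hblk
  exact not_mem_desc_of_child T ((mem_ordChildren T).mp hc)
    ((mem_dfs T c u).mp hu)

lemma dfs_nodup (u : V) : (dfs T u).Nodup := by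
  induction u using node_induction T with
  | h u ih =>
    rw [dfs_def]
    apply List.Nodup.append
    · rw [List.nodup_flatten]
      constructor
      · intro blk hblk
        rw [List.mem_map] at hblk
        obtain ⟨c, hc, rfl⟩ := hblk
        exact ih c ((mem_ordChildren T).mp hc)
      · rw [List.pairwise_map]
        exact (ordChildren_nodup T u).imp_of_mem
          (fun {a b} ha hb hab x hxa hxb =>
            Finset.disjoint_left.mp
              (desc_disjoint T ((mem_ordChildren T).mp ha) ((mem_ordChildren T).mp hb) hab)
              ((mem_dfs T a x).mp hxa) ((mem_dfs T b x).mp hxb))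
    · exact List.nodup_singleton u
    · intro x hx hx'
      rw [List.mem_singleton] at hx'
      exact not_mem_flatten_self T u (hx' ▸ hx)

lemma dfs_toFinset (u : V) : (dfs T u).toFinset = desc T u := by
  ext v; rw [List.mem_toFinset]; exact mem_dfs T u v

lemma dfs_length (u : V) : (dfs T u).length = (desc T u).card := by
  rw [← dfs_toFinset, List.toFinset_card_of_nodup (dfs_nodup T u)]

lemma dfs_length_pos (u : V) : 0 < (dfs T u).length := by
  rw [dfs_length]; exact card_desc_pos T u

lemma not_mem_flatten_of_disjoint {x c u : V} (hx : x ∈ desc T c) (hc : c ∈ children T u)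
    {s : List V} (hs : ∀ c' ∈ s, c' ∈ children T u ∧ c' ≠ c) :
    x ∉ (s.map (dfs T)).flatten := by
  rw [List.mem_flatten]
  rintro ⟨blk, hblk, hxc'⟩
  rw [List.mem_map] at hblk
  obtain ⟨c', hc', rfl⟩ := hblk
  obtain ⟨hmem, hne⟩ := hs c' hc'
  exact Finset.disjoint_left.mp (desc_disjoint T hmem hc hne)
    ((mem_dfs T c' x).mp hxc') hx

lemma indexOf_parent_lt (u : V) : ∀ v ∈ desc T u, v ≠ u →
    (dfs T u).idxOf v < (dfs T u).idxOf (T.parent v) := by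
  induction u using node_induction T with
  | h u ih =>
    intro v hv hvu
    obtain ⟨c, hc, hvc⟩ := exists_child_of_mem_desc T hv hvu
    rw [dfs_def]
    by_cases hpu : T.parent v = u
    · have hvJ : v ∈ ((ordChildren T u).map (dfs T)).flatten := by
        rw [List.mem_flatten]
        exact ⟨dfs T c, List.mem_map.mpr ⟨c, (mem_ordChildren T).mpr hc, rfl⟩,
          (mem_dfs T c v).mpr hvc⟩
      rw [hpu, List.idxOf_append_of_notMem (not_mem_flatten_self T u),
        List.idxOf_append_of_mem hvJ]
      have h1 := List.idxOf_lt_length_iff.mpr hvJ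
      have h0 : List.idxOf u [u] = 0 := List.idxOf_cons_self
      omega
    · have hvc' : v ≠ c := by rintro rfl; exact hpu ((mem_children T).mp hc).1
      have hpvc : T.parent v ∈ desc T c := parent_mem_desc T hvc hvc'
      obtain ⟨s, t, hst⟩ := List.append_of_mem ((mem_ordChildren T).mpr hc)
      have hsm : ∀ c' ∈ s, c' ∈ children T u ∧ c' ≠ c := by
        intro c' hc'
        have hnd := ordChildren_nodup T u
        rw [hst] at hnd
        have hcs : c ∉ s := by
          intro hcs
          have h2 := (List.nodup_append'.mp hnd).2.2
          exact h2 hcs List.mem_cons_self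
        refine ⟨(mem_ordChildren T).mp (by rw [hst]; exact List.mem_append_left _ hc'), ?_⟩
        rintro rfl; exact hcs hc'
      have hJeq : ((ordChildren T u).map (dfs T)).flatten
          = (s.map (dfs T)).flatten ++ (dfs T c ++ (t.map (dfs T)).flatten) := by
        rw [hst]
        simp
      have key : ∀ x ∈ desc T c,
          ((ordChildren T u).map (dfs T)).flatten.idxOf x
            = (s.map (dfs T)).flatten.length + (dfs T c).idxOf x := by
        intro x hx
        rw [hJeq, List.idxOf_append_of_notMem (not_mem_flatten_of_disjoint T hx hc hsm),
          List.idxOf_append_of_mem ((mem_dfs T c x).mpr hx)]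
      have hvJ : v ∈ ((ordChildren T u).map (dfs T)).flatten := by
        rw [hJeq]
        exact List.mem_append_right _ (List.mem_append_left _ ((mem_dfs T c v).mpr hvc))
      have hpJ : T.parent v ∈ ((ordChildren T u).map (dfs T)).flatten := by
        rw [hJeq]
        exact List.mem_append_right _ (List.mem_append_left _ ((mem_dfs T c (T.parent v)).mpr hpvc))
      rw [List.idxOf_append_of_mem hvJ, List.idxOf_append_of_mem hpJ,
        key v hvc, key _ hpvc]
      have := ih c hc v hvc hvc'
      omega


noncomputable def frontier (P : Finset V) : Finset V :=
  P.filter (fun v => T.parent v ∉ P)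

lemma mem_frontier {P : Finset V} {v : V} :
    v ∈ frontier T P ↔ v ∈ P ∧ T.parent v ∉ P := by
  simp [frontier]

lemma frontier_desc {c u : V} (hc : c ∈ children T u) : frontier T (desc T c) = {c} := by
  ext v
  rw [mem_frontier, Finset.mem_singleton]
  constructor
  · rintro ⟨hv, hp⟩
    by_contra hvc
    exact hp (parent_mem_desc T hv hvc)
  · rintro rfl
    refine ⟨self_mem_desc T _, ?_⟩
    rw [((mem_children T).mp hc).1]
    exact not_mem_desc_of_child T hc

lemma frontier_union_left {c1 c2 u : V} (hc1 : c1 ∈ children T u) (hc2 : c2 ∈ children T u)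
    (hne : c1 ≠ c2) (Q : Finset V) (hQ : ∀ x ∈ Q, x ∈ desc T c2) (hQ2 : ∀ x ∈ Q, x ≠ c2) :
    frontier T (desc T c1 ∪ Q) = insert c1 (frontier T Q) := by
  have hp1 : T.parent c1 = u := ((mem_children T).mp hc1).1
  ext v
  simp only [mem_frontier, Finset.mem_union, Finset.mem_insert]
  constructor
  · rintro ⟨hv | hv, hpar⟩
    · left
      by_contra hvc
      exact hpar (Or.inl (parent_mem_desc T hv hvc))
    · right
      exact ⟨hv, fun hp => hpar (Or.inr hp)⟩
  · rintro (rfl | hv)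
    · refine ⟨Or.inl (self_mem_desc T _), ?_⟩
      rintro (h | h)
      · rw [hp1] at h; exact not_mem_desc_of_child T hc1 h
      · rw [hp1] at h; exact not_mem_desc_of_child T hc2 (hQ u h)
    · obtain ⟨hv, hp⟩ := hv
      refine ⟨Or.inr hv, ?_⟩
      rintro (h | h)
      · exact Finset.disjoint_left.mp (desc_disjoint T hc1 hc2 hne) h
          (parent_mem_desc T (hQ v hv) (hQ2 v hv))
      · exact hp h

lemma one_le_clog {m : ℕ} (h : 2 ≤ m) : 1 ≤ Nat.clog 2 m := by
  by_contra hcon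
  push_neg at hcon
  have h1 : Nat.clog 2 m ≤ 0 := by omega
  have h2 := (Nat.clog_le_iff_le_pow one_lt_two).mp h1
  simp at h2
  omega

lemma two_le_clog {m : ℕ} (h : 3 ≤ m) : 2 ≤ Nat.clog 2 m := by
  by_contra hcon
  push_neg at hcon
  have h1 : Nat.clog 2 m ≤ 1 := by omega
  have h2 := (Nat.clog_le_iff_le_pow one_lt_two).mp h1
  norm_num at h2
  omega

lemma clog_step {n2 L : ℕ} (h2 : 2 ≤ n2) (hL : 2 * n2 ≤ L) :
    max 1 (Nat.clog 2 n2) + 1 ≤ max 1 (Nat.clog 2 L) := by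
  have hc1 : 1 ≤ Nat.clog 2 n2 := one_le_clog h2
  have hkey : Nat.clog 2 n2 + 1 ≤ Nat.clog 2 L := by
    by_contra hcon
    push_neg at hcon
    have h1 : Nat.clog 2 L ≤ Nat.clog 2 n2 := by omega
    have h3 : L ≤ 2 ^ Nat.clog 2 n2 := (Nat.clog_le_iff_le_pow one_lt_two).mp h1
    have h4 : 2 ^ (Nat.clog 2 n2).pred < n2 := Nat.pow_pred_clog_lt_self one_lt_two (by omega)
    rw [Nat.pred_eq_sub_one] at h4
    have h6 : Nat.clog 2 n2 - 1 + 1 = Nat.clog 2 n2 := by omega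
    have h5 : 2 ^ Nat.clog 2 n2 = 2 ^ (Nat.clog 2 n2 - 1) * 2 := by
      rw [← pow_succ, h6]
    omega
  omega

lemma self_not_mem_take (c : V) (j : ℕ) (hj : j < (dfs T c).length) :
    c ∉ (dfs T c).take j := by
  intro hmem
  have hd := dfs_def T c
  have hjle : j ≤ ((ordChildren T c).map (dfs T)).flatten.length := by
    rw [hd, List.length_append, List.length_singleton] at hj
    omega
  rw [hd, List.take_append_of_le_length hjle] at hmem
  exact not_mem_flatten_self T c (List.mem_of_mem_take hmem)

lemma frontier_card_le (h2 : ∀ u : V, (children T u).card ≤ 2) (u : V) :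
    ∀ i < (dfs T u).length,
      (frontier T ((dfs T u).take i).toFinset).card ≤ max 1 (Nat.clog 2 (dfs T u).length) := by
  induction u using node_induction T with
  | h u ih =>
    intro i hi
    have hlen2 : (ordChildren T u).length ≤ 2 := by
      rw [ordChildren_length]; exact h2 u
    rcases hoc : ordChildren T u with _ | ⟨c1, tl⟩
    · have hd : dfs T u = [u] := by rw [dfs_def, hoc]; simp
      rw [hd] at hi ⊢
      simp only [List.length_singleton] at hi
      have hi0 : i = 0 := by omega
      subst hi0
      simp [frontier]
    rcases tl with _ | ⟨c2, tl2⟩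
    · -- one child c1
      have hc1 : c1 ∈ children T u := (mem_ordChildren T).mp (by rw [hoc]; simp)
      have hd : dfs T u = dfs T c1 ++ [u] := by rw [dfs_def, hoc]; simp
      have hlen1 : (dfs T u).length = (dfs T c1).length + 1 := by rw [hd]; simp
      have hile : i ≤ (dfs T c1).length := by omega
      have htake : (dfs T u).take i = (dfs T c1).take i := by
        rw [hd, List.take_append_of_le_length hile]
      rw [htake]
      rcases lt_or_eq_of_le hile with hlt | heq
      · refine (ih c1 hc1 i hlt).trans ?_
        have hm : Nat.clog 2 (dfs T c1).length ≤ Nat.clog 2 (dfs T u).length :=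
          Nat.clog_mono_right 2 (by omega)
        omega
      · rw [heq, List.take_length, dfs_toFinset, frontier_desc T hc1, Finset.card_singleton]
        exact le_max_left 1 _
    rcases tl2 with _ | ⟨c3, tl3⟩
    swap
    · exfalso
      rw [hoc] at hlen2
      simp at hlen2
    -- two children c1 c2
    · have hc1 : c1 ∈ children T u := (mem_ordChildren T).mp (by rw [hoc]; simp)
      have hc2 : c2 ∈ children T u := (mem_ordChildren T).mp (by rw [hoc]; simp)
      have hne : c1 ≠ c2 := by
        have hnd := ordChildren_nodup T u
        rw [hoc] at hnd
        simp at hnd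
        exact hnd
      have hsort : (desc T c2).card ≤ (desc T c1).card := by
        have hs := ordChildren_sorted T u
        rw [hoc] at hs
        exact (List.pairwise_cons.mp hs).1 c2 (by simp)
      have hn1 : (dfs T c1).length = (desc T c1).card := dfs_length T c1
      have hn2 : (dfs T c2).length = (desc T c2).card := dfs_length T c2
      have hd : dfs T u = dfs T c1 ++ (dfs T c2 ++ [u]) := by
        rw [dfs_def, hoc]; simp
      have hLlen : (dfs T u).length = (dfs T c1).length + (dfs T c2).length + 1 := by
        rw [hd]; simp only [List.length_append, List.length_singleton]; omega
      have hpos1 := dfs_length_pos T c1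
      have hpos2 := dfs_length_pos T c2
      by_cases hi1 : i ≤ (dfs T c1).length
      · have htake : (dfs T u).take i = (dfs T c1).take i := by
          rw [hd, List.take_append_of_le_length hi1]
        rw [htake]
        rcases lt_or_eq_of_le hi1 with hlt | heq
        · refine (ih c1 hc1 i hlt).trans ?_
          have hm : Nat.clog 2 (dfs T c1).length ≤ Nat.clog 2 (dfs T u).length :=
            Nat.clog_mono_right 2 (by omega)
          omega
        · rw [heq, List.take_length, dfs_toFinset, frontier_desc T hc1, Finset.card_singleton]
          exact le_max_left 1 _
      · push_neg at hi1
        obtain ⟨j, rfl⟩ : ∃ j, i = (dfs T c1).length + j := ⟨i - (dfs T c1).length, by omega⟩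
        have hjle : j ≤ (dfs T c2).length := by omega
        have hjpos : 0 < j := by omega
        have htake : (dfs T u).take ((dfs T c1).length + j)
            = dfs T c1 ++ (dfs T c2 ++ [u]).take j := by
          rw [hd, List.take_append]; simp
        have htake2 : (dfs T c2 ++ [u]).take j = (dfs T c2).take j :=
          List.take_append_of_le_length hjle
        rw [htake, htake2, List.toFinset_append, dfs_toFinset]
        rcases lt_or_eq_of_le hjle with hlt | heq
        · have hQ : ∀ x ∈ ((dfs T c2).take j).toFinset, x ∈ desc T c2 := fun x hx =>
            (mem_dfs T c2 x).mp (List.mem_of_mem_take (List.mem_toFinset.mp hx))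
          have hQ2 : ∀ x ∈ ((dfs T c2).take j).toFinset, x ≠ c2 := by
            intro x hx
            rw [List.mem_toFinset] at hx
            rintro rfl
            exact self_not_mem_take T x j hlt hx
          rw [frontier_union_left T hc1 hc2 hne _ hQ hQ2]
          have hbF := ih c2 hc2 j hlt
          have harith := clog_step (n2 := (dfs T c2).length) (L := (dfs T u).length)
            (by omega) (by omega)
          have hcins := Finset.card_insert_le c1 (frontier T ((dfs T c2).take j).toFinset)
          omega
        · rw [heq, List.take_length, dfs_toFinset]
          have hsub : frontier T (desc T c1 ∪ desc T c2) ⊆ {c1, c2} := by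
            intro v hv
            rw [mem_frontier, Finset.mem_union] at hv
            simp only [Finset.mem_insert, Finset.mem_singleton]
            obtain ⟨hv1 | hv1, hp⟩ := hv
            · left
              by_contra hvc
              exact hp (Finset.mem_union_left _ (parent_mem_desc T hv1 hvc))
            · right
              by_contra hvc
              exact hp (Finset.mem_union_right _ (parent_mem_desc T hv1 hvc))
          have hc2' : (frontier T (desc T c1 ∪ desc T c2)).card ≤ 2 := by
            refine (Finset.card_le_card hsub).trans ?_
            exact (Finset.card_insert_le _ _).trans (by simp)
          have h3L : 3 ≤ (dfs T u).length := by omega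
          have := two_le_clog h3L
          omega

lemma mem_take_iff_indexOf_lt {α : Type*} [DecidableEq α] {l : List α} {v : α} (hv : v ∈ l)
    (i : ℕ) : v ∈ l.take i ↔ l.idxOf v < i := by
  constructor
  · intro h
    have h1 : l.idxOf v = (l.take i).idxOf v := by
      conv_lhs => rw [← List.take_append_drop i l]
      rw [List.idxOf_append_of_mem h]
    rw [h1]
    exact (List.idxOf_lt_length_iff.mpr h).trans_le (List.length_take_le i l)
  · intro h
    by_contra hmem
    have hilen : i < l.length := by
      by_contra hle
      push_neg at hle
      rw [List.take_of_length_le hle] at hmem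
      exact hmem hv
    have h1 : l.idxOf v = (l.take i).length + (l.drop i).idxOf v := by
      conv_lhs => rw [← List.take_append_drop i l]
      rw [List.idxOf_append_of_notMem hmem]
    rw [List.length_take] at h1
    omega

lemma climb {J : Type*} [DecidableEq J] (X : V → Finset J)
    (hnice : ∀ u : V,
      ({c : V | T.parent c = u ∧ c ≠ T.root} = ∅ ∧ (X u).card = 1) ∨
      (∃ c : V, ∃ j : J, {c' : V | T.parent c' = u ∧ c' ≠ T.root} = {c} ∧
        j ∉ X c ∧ X u = insert j (X c)) ∨
      (∃ c : V, ∃ j : J, {c' : V | T.parent c' = u ∧ c' ≠ T.root} = {c} ∧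
        j ∉ X u ∧ X c = insert j (X u)) ∨
      (∃ a b : V, a ≠ b ∧ {c' : V | T.parent c' = u ∧ c' ≠ T.root} = {a, b} ∧
        X u = X a ∧ X u = X b))
    (P : Finset V) (j : J)
    (hforg : ¬ ∃ u c : V, u ∈ P ∧ T.parent c = u ∧ c ≠ T.root ∧ j ∉ X u ∧
      X c = insert j (X u)) :
    ∀ u : V, u ∈ P → j ∈ X u → ∃ v ∈ P, (T.parent v ∉ P ∨ v = T.root) ∧ j ∈ X v := by
  suffices h : ∀ d : ℕ, ∀ u : V, dep T u = d → u ∈ P → j ∈ X u →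
      ∃ v ∈ P, (T.parent v ∉ P ∨ v = T.root) ∧ j ∈ X v by
    intro u hu hju
    exact h _ u rfl hu hju
  intro d
  induction d using Nat.strong_induction_on with
  | _ d ih =>
    intro u hd hu hju
    by_cases hur : u = T.root
    · exact ⟨u, hu, Or.inr hur, hju⟩
    by_cases hpu : T.parent u ∈ P
    · have humem : u ∈ {c' : V | T.parent c' = T.parent u ∧ c' ≠ T.root} := ⟨rfl, hur⟩
      have hjp : j ∈ X (T.parent u) := by
        rcases hnice (T.parent u) with ⟨hset, -⟩ | ⟨c, j', hset, hj', hXu⟩ |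
          ⟨c, j', hset, hj', hXc⟩ | ⟨a, b, hab, hset, hXa, hXb⟩
        · rw [hset] at humem
          exact absurd humem (Set.notMem_empty u)
        · rw [hset, Set.mem_singleton_iff] at humem
          rw [hXu]
          exact Finset.mem_insert_of_mem (humem ▸ hju)
        · rw [hset, Set.mem_singleton_iff] at humem
          subst humem
          by_cases hjj : j = j'
          · exact absurd ⟨T.parent u, u, hpu, rfl, hur, hjj ▸ hj', hjj ▸ hXc⟩ hforg
          · rw [hXc] at hju
            rcases Finset.mem_insert.mp hju with h | h
            · exact absurd h hjj
            · exact h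
        · rw [hset, Set.mem_insert_iff, Set.mem_singleton_iff] at humem
          rcases humem with humem | humem
          · rw [hXa, ← humem]; exact hju
          · rw [hXb, ← humem]; exact hju
      have hdp : dep T (T.parent u) < d := by
        have := dep_parent T u hur
        omega
      exact ih _ hdp (T.parent u) rfl hpu hjp
    · exact ⟨u, hu, Or.inl hpu, hju⟩

end Stmt2Aux


/-- For a nice tree decomposition (rooted via `parent` with root `r`, bags `X`)
of a graph on `n` vertices, with at most `4n` nodes and all bags of size at
most `w + 1`, there exists a bottom-up layout `L` such that at every phase `i`
the set of vertices already seen but not yet forgotten has size at most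
`(w + 1) * ⌈log₂ (4n)⌉`. -/
theorem stmt2 {V J : Type*} [Fintype V] [Fintype J] [DecidableEq J]
    (parent : V → V) (r : V)
    (hroot : parent r = r)
    (hreach : ∀ v : V, ∃ n : ℕ, parent^[n] v = r)
    (X : V → Finset J) (w : ℕ)
    (hwidth : ∀ u : V, (X u).card ≤ w + 1)
    (hsize : Fintype.card V ≤ 4 * Fintype.card J)
    (hnice : ∀ u : V,
      ({c : V | parent c = u ∧ c ≠ r} = ∅ ∧ (X u).card = 1) ∨
      (∃ c : V, ∃ j : J, {c' : V | parent c' = u ∧ c' ≠ r} = {c} ∧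
        j ∉ X c ∧ X u = insert j (X c)) ∨
      (∃ c : V, ∃ j : J, {c' : V | parent c' = u ∧ c' ≠ r} = {c} ∧
        j ∉ X u ∧ X c = insert j (X u)) ∨
      (∃ l rc : V, l ≠ rc ∧ {c' : V | parent c' = u ∧ c' ≠ r} = {l, rc} ∧
        X u = X l ∧ X u = X rc)) :
    ∃ L : V ≃ Fin (Fintype.card V),
      (∀ c : V, c ≠ r → (L c : ℕ) < (L (parent c) : ℕ)) ∧
      ∀ i : ℕ,
        Set.ncard {j : J |
            (∃ u : V, (L u : ℕ) < i ∧ j ∈ X u) ∧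
            ¬ ∃ u c : V, (L u : ℕ) < i ∧ parent c = u ∧ c ≠ r ∧
                j ∉ X u ∧ X c = insert j (X u)}
          ≤ (w + 1) * Nat.clog 2 (4 * Fintype.card J) := by
  classical
  set T : Stmt2Aux.RT V := ⟨parent, r, hroot, hreach⟩ with hT
  have hTp : T.parent = parent := rfl
  have hTr : T.root = r := rfl
  set l : List V := Stmt2Aux.dfs T T.root with hldef
  have hdesc_root : Stmt2Aux.desc T T.root = Finset.univ := by
    ext v
    simp only [Finset.mem_univ, iff_true]
    exact Stmt2Aux.mem_desc_root T v
  have hlen : l.length = Fintype.card V := by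
    rw [hldef, Stmt2Aux.dfs_length, hdesc_root, Finset.card_univ]
  have hmeml : ∀ v, v ∈ l := fun v =>
    (Stmt2Aux.mem_dfs T T.root v).mpr (Stmt2Aux.mem_desc_root T v)
  have hVpos : 0 < Fintype.card V := Fintype.card_pos_iff.mpr ⟨r⟩
  have hJpos : 0 < Fintype.card J := by
    by_contra h
    push_neg at h
    omega
  have h4J2 : 2 ≤ 4 * Fintype.card J := by omega
  have hclog1 : 1 ≤ Nat.clog 2 (4 * Fintype.card J) := Stmt2Aux.one_le_clog h4J2
  have hfin : ∀ v, l.idxOf v < Fintype.card V := fun v => by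
    rw [← hlen]
    exact List.idxOf_lt_length_iff.mpr (hmeml v)
  have hbij : Function.Bijective
      (fun v : V => (⟨l.idxOf v, hfin v⟩ : Fin (Fintype.card V))) := by
    refine (Fintype.bijective_iff_injective_and_card _).mpr ⟨?_, by simp⟩
    intro a b hab
    exact (List.idxOf_inj (hmeml a)).mp (by simpa [Fin.ext_iff] using hab)
  set L : V ≃ Fin (Fintype.card V) := Equiv.ofBijective _ hbij with hLdef
  have hLcoe : ∀ v, (L v : ℕ) = l.idxOf v := fun v => rfl
  have h2 : ∀ u : V, (Stmt2Aux.children T u).card ≤ 2 := by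
    intro u
    have hcoe : ((Stmt2Aux.children T u : Finset V) : Set V)
        = {c : V | parent c = u ∧ c ≠ r} := by
      ext c
      simp only [Finset.mem_coe, Set.mem_setOf_eq, Stmt2Aux.mem_children]; exact Iff.rfl
    rcases hnice u with ⟨hset, -⟩ | ⟨c, j', hset, -, -⟩ | ⟨c, j', hset, -, -⟩ |
      ⟨a, b, -, hset, -, -⟩
    · have he : Stmt2Aux.children T u = ∅ := Finset.coe_injective (by rw [hcoe, hset]; simp)
      rw [he]; simp
    · have he : Stmt2Aux.children T u = {c} := Finset.coe_injective (by rw [hcoe, hset]; simp)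
      rw [he]; simp
    · have he : Stmt2Aux.children T u = {c} := Finset.coe_injective (by rw [hcoe, hset]; simp)
      rw [he]; simp
    · have he : Stmt2Aux.children T u = {a, b} := Finset.coe_injective (by rw [hcoe, hset]; simp)
      rw [he]
      exact (Finset.card_insert_le _ _).trans (by simp)
  refine ⟨L, ?_, ?_⟩
  · intro c hc
    rw [hLcoe, hLcoe]
    exact Stmt2Aux.indexOf_parent_lt T T.root c (Stmt2Aux.mem_desc_root T c)
      (by rw [hTr]; exact hc)
  · intro i
    set P : Finset V := Finset.univ.filter (fun v => l.idxOf v < i) with hPdef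
    have hmemP : ∀ v, v ∈ P ↔ l.idxOf v < i := fun v => by
      rw [hPdef]; simp
    suffices hsuf : ∃ F : Finset V, F.card ≤ Nat.clog 2 (4 * Fintype.card J) ∧
        ∀ j : J, ((∃ u : V, (L u : ℕ) < i ∧ j ∈ X u) ∧
          ¬ ∃ u c : V, (L u : ℕ) < i ∧ parent c = u ∧ c ≠ r ∧ j ∉ X u ∧
            X c = insert j (X u)) → j ∈ F.biUnion X by
      obtain ⟨F, hFcard, hFsub⟩ := hsuf
      have hsub : {j : J | (∃ u : V, (L u : ℕ) < i ∧ j ∈ X u) ∧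
          ¬ ∃ u c : V, (L u : ℕ) < i ∧ parent c = u ∧ c ≠ r ∧ j ∉ X u ∧
            X c = insert j (X u)} ⊆ (↑(F.biUnion X) : Set J) := fun j hj => hFsub j hj
      calc Set.ncard {j : J | (∃ u : V, (L u : ℕ) < i ∧ j ∈ X u) ∧
          ¬ ∃ u c : V, (L u : ℕ) < i ∧ parent c = u ∧ c ≠ r ∧ j ∉ X u ∧
            X c = insert j (X u)}
          ≤ Set.ncard (↑(F.biUnion X) : Set J) :=
            Set.ncard_le_ncard hsub (Finset.finite_toSet _)
        _ = (F.biUnion X).card := Set.ncard_coe_finset _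
        _ ≤ ∑ v ∈ F, (X v).card := Finset.card_biUnion_le
        _ ≤ F.card * (w + 1) := by
            have hs := Finset.sum_le_card_nsmul F (fun v => (X v).card) (w + 1)
              (fun v _ => hwidth v)
            simpa [smul_eq_mul] using hs
        _ ≤ Nat.clog 2 (4 * Fintype.card J) * (w + 1) := Nat.mul_le_mul_right _ hFcard
        _ = (w + 1) * Nat.clog 2 (4 * Fintype.card J) := Nat.mul_comm _ _
    by_cases hiV : i < Fintype.card V
    · refine ⟨Stmt2Aux.frontier T ((l.take i).toFinset), ?_, ?_⟩
      · have hi' : i < (Stmt2Aux.dfs T T.root).length := by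
          rw [← hldef, hlen]
          exact hiV
        have hcard := Stmt2Aux.frontier_card_le T h2 T.root i hi'
        rw [← hldef] at hcard
        refine hcard.trans ?_
        have hm : Nat.clog 2 l.length ≤ Nat.clog 2 (4 * Fintype.card J) :=
          Nat.clog_mono_right 2 (by omega)
        omega
      · intro j hj
        obtain ⟨⟨u, hu, hju⟩, hnf⟩ := hj
        have hforgP : ¬ ∃ u c : V, u ∈ P ∧ T.parent c = u ∧ c ≠ T.root ∧ j ∉ X u ∧
            X c = insert j (X u) := by
          rintro ⟨u', c', hu', hpc', hc'r, hju', hXc'⟩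
          exact hnf ⟨u', c', by rw [hLcoe]; exact (hmemP u').mp hu', hpc', hc'r, hju', hXc'⟩
        obtain ⟨v, hvP, hvf, hjv⟩ := Stmt2Aux.climb T X hnice P j hforgP u
          ((hmemP u).mpr (by rw [← hLcoe]; exact hu)) hju
        have hvr : v ≠ T.root := by
          rintro rfl
          have hidx : l.idxOf v = l.length - 1 := by
            rw [hldef, Stmt2Aux.dfs_def,
              List.idxOf_append_of_notMem (Stmt2Aux.not_mem_flatten_self T T.root)]
            simp
          have hlti := (hmemP v).mp hvP
          omega
        have hvfr : T.parent v ∉ P := hvf.resolve_right hvr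
        have hPeq : P = (l.take i).toFinset := by
          ext v'
          rw [List.mem_toFinset, hmemP v', Stmt2Aux.mem_take_iff_indexOf_lt (hmeml v') i]
        rw [Finset.mem_biUnion]
        refine ⟨v, ?_, hjv⟩
        rw [Stmt2Aux.mem_frontier, ← hPeq]
        exact ⟨hvP, hvfr⟩
    · push_neg at hiV
      refine ⟨{T.root}, by simpa using hclog1, ?_⟩
      intro j hj
      obtain ⟨⟨u, hu, hju⟩, hnf⟩ := hj
      have hPuniv : ∀ v, v ∈ P := fun v => (hmemP v).mpr (by have := hfin v; omega)
      have hforgP : ¬ ∃ u c : V, u ∈ P ∧ T.parent c = u ∧ c ≠ T.root ∧ j ∉ X u ∧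
          X c = insert j (X u) := by
        rintro ⟨u', c', hu', hpc', hc'r, hju', hXc'⟩
        exact hnf ⟨u', c', by rw [hLcoe]; exact (hmemP u').mp hu', hpc', hc'r, hju', hXc'⟩
      obtain ⟨v, hvP, hvf, hjv⟩ := Stmt2Aux.climb T X hnice P j hforgP u (hPuniv u) hju
      have hvr : v = T.root := hvf.resolve_left (fun h => h (hPuniv _))
      rw [Finset.mem_biUnion]
      exact ⟨T.root, Finset.mem_singleton_self _, hvr ▸ hjv⟩
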